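/- arXiv:2111.03411 — 2 statements merged into one kernel-verified Lean document; each statement's English description precedes it below -/
import Mathlib

section
/- Let p ∈ (1,2). For r₀ > 0 and r₁ > 0 define I(r₀, r₁) = ∫₀^{r₀} (e^{r₀} − r₀ − e^{w} + w)^{(1−p)/p} dw + ∫_{−r₁}^{0} (e^{−r₁} + r₁ − e^{w} + w)^{(1−p)/p} dw. Then I(r₀, r₁) → 0 as (r₀, r₁) → (0, 0) with r₀, r₁ > 0. -/
open Filter

private lemma exp_quad (s : ℝ) (hs : 0 ≤ s) : 1 + s + s^2/4 ≤ Real.exp s := by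
  have h := Real.add_one_le_exp (s/2)
  have h2 : Real.exp (s/2) * Real.exp (s/2) = Real.exp s := by
    rw [← Real.exp_add]; ring_nf
  nlinarith [Real.exp_pos (s/2)]

private lemma exp_quad_neg (s : ℝ) (hs : 0 ≤ s) (hs1 : s ≤ 2) :
    (1 - s/2)^2 ≤ Real.exp (-s) := by
  have h := Real.add_one_le_exp (-(s/2))
  have h2 : Real.exp (-(s/2)) * Real.exp (-(s/2)) = Real.exp (-s) := by
    rw [← Real.exp_add]; ring_nf
  nlinarith [Real.exp_pos (-(s/2))]

private lemma lemA {w r : ℝ} (hw : 0 ≤ w) (hwr : w ≤ r) :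
    (r - w)^2/4 ≤ Real.exp r - r - Real.exp w + w := by
  set s := r - w with hsdef
  have hs : 0 ≤ s := by linarith
  have h1 : Real.exp r = Real.exp w * Real.exp s := by
    rw [← Real.exp_add, hsdef]; ring_nf
  have h2 := exp_quad s hs
  have h3 : (1:ℝ) ≤ Real.exp w := Real.one_le_exp hw
  nlinarith [Real.exp_pos w, Real.exp_pos s]

private lemma lemB {w r : ℝ} (hw : 0 ≤ w) (hwr : w ≤ r) (hr1 : r ≤ 1) :
    (r - w)^2/4 ≤ Real.exp (-r) + r - Real.exp (-w) - w := by
  set s := r - w with hsdef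
  have hs : 0 ≤ s := by linarith
  have hs1 : s ≤ 2 := by linarith
  have h1 : Real.exp (-r) = Real.exp (-w) * Real.exp (-s) := by
    rw [← Real.exp_add, hsdef]; ring_nf
  have h2 := exp_quad_neg s hs hs1
  have h3 : Real.exp (-w) ≤ 1 := Real.exp_le_one_iff.2 (by linarith)
  have h4 : Real.exp (-s) ≤ 1 := Real.exp_le_one_iff.2 (by linarith)
  nlinarith [Real.exp_pos (-w), Real.exp_pos (-s),
    mul_nonneg (sub_nonneg.2 h3) (sub_nonneg.2 h4)]

private lemma key_bound (α : ℝ) (hα1 : (-1:ℝ) < 2*α) (hα0 : α < 0) (r : ℝ) (hr : 0 < r)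
    (f : ℝ → ℝ) (hmeas : Measurable f)
    (hf : ∀ w ∈ Set.Ico (0:ℝ) r, (r - w)^2/4 ≤ f w) (hfr : f r = 0) :
    ∫ w in (0:ℝ)..r, (f w) ^ α ≤ (4:ℝ) ^ (-α) * (r ^ (2*α+1) / (2*α+1)) := by
  have h2α : (2*α : ℝ) ≠ 0 := by linarith
  have hαne : α ≠ 0 := by linarith
  -- pointwise bound on Icc
  have hpt : ∀ w ∈ Set.Icc (0:ℝ) r, (f w) ^ α ≤ (4:ℝ)^(-α) * (r - w) ^ (2*α) := by
    intro w hw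
    rcases eq_or_lt_of_le hw.2 with he | hlt
    · rw [he, hfr, sub_self, Real.zero_rpow hαne, Real.zero_rpow h2α, mul_zero]
    · have hrw : (0:ℝ) < r - w := by linarith
      have hbase : (0:ℝ) < (r - w)^2/4 := by positivity
      have hle := hf w ⟨hw.1, hlt⟩
      have h1 : (f w) ^ α ≤ ((r - w)^2/4) ^ α :=
        Real.rpow_le_rpow_of_nonpos hbase hle hα0.le
      have h2 : ((r - w)^2/4 : ℝ) ^ α = (4:ℝ)^(-α) * (r - w) ^ (2*α) := by
        rw [Real.div_rpow (by positivity) (by norm_num), Real.rpow_neg (by norm_num : (0:ℝ) ≤ 4),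
          ← Real.rpow_natCast (r - w) 2, ← Real.rpow_mul hrw.le]
        push_cast
        rw [div_eq_inv_mul]
      rw [h2] at h1; exact h1
  -- integrability of the comparison function
  have hg_int : IntervalIntegrable (fun w => (4:ℝ)^(-α) * (r - w) ^ (2*α)) MeasureTheory.volume 0 r := by
    have h := ((intervalIntegral.intervalIntegrable_rpow' (a := 0) (b := r) hα1).comp_sub_left r).symm
    simpa using h.const_mul ((4:ℝ)^(-α))
  -- integrability of the integrand
  have hf_int : IntervalIntegrable (fun w => (f w) ^ α) MeasureTheory.volume 0 r := by
    refine hg_int.mono_fun ((hmeas.pow measurable_const).aestronglyMeasurable) ?_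
    refine MeasureTheory.ae_restrict_of_forall_mem measurableSet_uIoc ?_
    intro w hw
    rw [Set.uIoc_of_le hr.le] at hw
    have hw' : w ∈ Set.Icc (0:ℝ) r := ⟨hw.1.le, hw.2⟩
    have hfw : 0 ≤ f w := by
      rcases eq_or_lt_of_le hw'.2 with he | hlt
      · rw [he, hfr]
      · exact le_trans (by positivity) (hf w ⟨hw'.1, hlt⟩)
    show ‖(f w) ^ α‖ ≤ ‖(4:ℝ)^(-α) * (r - w) ^ (2*α)‖
    have h1 : ‖(f w) ^ α‖ = (f w) ^ α := Real.norm_of_nonneg (Real.rpow_nonneg hfw α)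
    have h2 : ‖(4:ℝ)^(-α) * (r - w) ^ (2*α)‖ = (4:ℝ)^(-α) * (r - w) ^ (2*α) := by
      apply Real.norm_of_nonneg
      have : (0:ℝ) ≤ r - w := by linarith [hw'.2]
      positivity
    rw [h1, h2]
    exact hpt w hw'
  -- monotonicity of the integral
  calc ∫ w in (0:ℝ)..r, (f w) ^ α
      ≤ ∫ w in (0:ℝ)..r, (4:ℝ)^(-α) * (r - w) ^ (2*α) :=
        intervalIntegral.integral_mono_on hr.le hf_int hg_int hpt
    _ = (4:ℝ)^(-α) * ∫ w in (0:ℝ)..r, (r - w) ^ (2*α) := by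
        rw [← intervalIntegral.integral_const_mul]
    _ = (4:ℝ)^(-α) * (r ^ (2*α+1) / (2*α+1)) := by
        congr 1
        have h := intervalIntegral.integral_comp_sub_left (a := 0) (b := r)
          (fun x => x ^ (2*α)) r
        simp only [sub_zero, sub_self] at h
        rw [h, integral_rpow (Or.inl hα1), Real.zero_rpow (by linarith)]
        ring

/-- For `p ∈ (1,2)`, the period integral
`I(r₀,r₁) = ∫₀^{r₀} (e^{r₀} − r₀ − e^w + w)^{(1−p)/p} dw
 + ∫_{−r₁}^{0} (e^{−r₁} + r₁ − e^w + w)^{(1−p)/p} dw`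
tends to `0` as `(r₀, r₁) → (0,0)` with `r₀, r₁ > 0`. -/
theorem period_tends_to_zero (p : ℝ) (hp : p ∈ Set.Ioo (1 : ℝ) 2) :
    Tendsto
      (fun r : ℝ × ℝ =>
        (∫ w in (0 : ℝ)..r.1, (Real.exp r.1 - r.1 - Real.exp w + w) ^ ((1 - p) / p)) +
        ∫ w in (-r.2)..(0 : ℝ), (Real.exp (-r.2) + r.2 - Real.exp w + w) ^ ((1 - p) / p))
      (nhdsWithin (0, 0) (Set.Ioi (0 : ℝ) ×ˢ Set.Ioi (0 : ℝ)))
      (nhds 0) := by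
  obtain ⟨hp1, hp2⟩ := hp
  have hppos : (0:ℝ) < p := by linarith
  set α := (1 - p) / p with hαdef
  have hα0 : α < 0 := div_neg_of_neg_of_pos (by linarith) hppos
  have hα1 : (-1:ℝ) < 2*α := by
    rw [hαdef, show 2*((1-p)/p) = (2-2*p)/p from by ring, lt_div_iff₀ hppos]
    linarith
  have hαexp : (0:ℝ) < 2*α + 1 := by linarith
  -- rewrite second integral
  have hswap : ∀ r₂ : ℝ, (∫ w in (-r₂)..(0:ℝ), (Real.exp (-r₂) + r₂ - Real.exp w + w) ^ α)
      = ∫ w in (0:ℝ)..r₂, (Real.exp (-r₂) + r₂ - Real.exp (-w) - w) ^ α := by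
    intro r₂
    have h := intervalIntegral.integral_comp_neg (a := 0) (b := r₂)
      (fun w => (Real.exp (-r₂) + r₂ - Real.exp w + w) ^ α)
    simp only [neg_zero] at h
    rw [← h]
    simp only [sub_eq_add_neg]
  set G : ℝ × ℝ → ℝ := fun r =>
    (4:ℝ)^(-α) * (r.1 ^ (2*α+1) / (2*α+1)) + (4:ℝ)^(-α) * (r.2 ^ (2*α+1) / (2*α+1)) with hGdef
  have hev1 : ∀ᶠ r : ℝ × ℝ in nhdsWithin (0,0) (Set.Ioi (0:ℝ) ×ˢ Set.Ioi (0:ℝ)),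
      r.2 < 1 := by
    apply Filter.Eventually.filter_mono nhdsWithin_le_nhds
    exact (continuous_snd.tendsto ((0:ℝ),(0:ℝ))).eventually_lt_const (by norm_num)
  apply squeeze_zero' (g := G)
  · -- eventual nonnegativity
    filter_upwards [self_mem_nhdsWithin, hev1] with r hr hr21
    obtain ⟨hr1, hr2⟩ := hr
    simp only [Set.mem_Ioi] at hr1 hr2
    have h1 : 0 ≤ ∫ w in (0:ℝ)..r.1, (Real.exp r.1 - r.1 - Real.exp w + w) ^ α := by
      apply intervalIntegral.integral_nonneg hr1.le
      intro w hw
      apply Real.rpow_nonneg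
      have := lemA hw.1 hw.2
      nlinarith [sq_nonneg (r.1 - w)]
    have h2 : 0 ≤ ∫ w in (-r.2)..(0:ℝ), (Real.exp (-r.2) + r.2 - Real.exp w + w) ^ α := by
      rw [hswap]
      apply intervalIntegral.integral_nonneg hr2.le
      intro w hw
      apply Real.rpow_nonneg
      have := lemB hw.1 hw.2 hr21.le
      nlinarith [sq_nonneg (r.2 - w)]
    linarith
  · -- eventual upper bound
    filter_upwards [self_mem_nhdsWithin, hev1] with r hr hr21
    obtain ⟨hr1, hr2⟩ := hr
    simp only [Set.mem_Ioi] at hr1 hr2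
    have hb1 : (∫ w in (0:ℝ)..r.1, (Real.exp r.1 - r.1 - Real.exp w + w) ^ α)
        ≤ (4:ℝ)^(-α) * (r.1 ^ (2*α+1) / (2*α+1)) := by
      apply key_bound α hα1 hα0 r.1 hr1
      · fun_prop
      · intro w hw; exact lemA hw.1 hw.2.le
      · simp
    have hb2 : (∫ w in (-r.2)..(0:ℝ), (Real.exp (-r.2) + r.2 - Real.exp w + w) ^ α)
        ≤ (4:ℝ)^(-α) * (r.2 ^ (2*α+1) / (2*α+1)) := by
      rw [hswap]
      apply key_bound α hα1 hα0 r.2 hr2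
      · fun_prop
      · intro w hw; exact lemB hw.1 hw.2.le hr21.le
      · simp
    exact add_le_add hb1 hb2
  · -- the bound tends to 0
    have hc : ContinuousAt (fun x : ℝ => x ^ (2*α+1)) 0 :=
      Real.continuousAt_rpow_const 0 (2*α+1) (Or.inr hαexp.le)
    have h0 : (0:ℝ) ^ (2*α+1) = 0 := Real.zero_rpow (by linarith)
    have h1 : Tendsto (fun r : ℝ × ℝ => r.1 ^ (2*α+1)) (nhds ((0:ℝ),(0:ℝ))) (nhds 0) := by
      have := hc.tendsto.comp (continuous_fst.tendsto ((0:ℝ),(0:ℝ)))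
      simpa only [h0, Function.comp_def] using this
    have h2 : Tendsto (fun r : ℝ × ℝ => r.2 ^ (2*α+1)) (nhds ((0:ℝ),(0:ℝ))) (nhds 0) := by
      have := hc.tendsto.comp (continuous_snd.tendsto ((0:ℝ),(0:ℝ)))
      simpa only [h0, Function.comp_def] using this
    have := ((h1.div_const (2*α+1)).const_mul ((4:ℝ)^(-α))).add
      ((h2.div_const (2*α+1)).const_mul ((4:ℝ)^(-α)))
    simp only [zero_div, mul_zero, add_zero] at this
    exact this.mono_left nhdsWithin_le_nhds
end

section
/- Let p ∈ (1,2). Then ∫_{−r₁}^{0} (e^{−r₁} + r₁ − e^{w} + w)^{(1−p)/p} dw → ∞ as r₁ → ∞. In particular, the period T(k) of the periodic orbits of the Hamiltonian system tends to infinity as the energy k tends to infinity. -/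
open Filter

private lemma key_lb {r₁ w : ℝ} (hr : 4 ≤ r₁) (hw1 : -r₁ < w) (hw2 : w ≤ 0) :
    (r₁ + w) / 2 ≤ Real.exp (-r₁) + r₁ - Real.exp w + w := by
  rcases le_or_gt w (-1) with h | h
  · have e1 : Real.exp w - Real.exp (-r₁) = Real.exp w * (1 - Real.exp (-(r₁ + w))) := by
      rw [mul_sub, ← Real.exp_add]; ring_nf
    have hx : 0 ≤ r₁ + w := by linarith
    have e2 : 1 - Real.exp (-(r₁ + w)) ≤ r₁ + w := by
      linarith [Real.add_one_le_exp (-(r₁ + w))]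
    have e3 : 0 ≤ 1 - Real.exp (-(r₁ + w)) := by
      have : Real.exp (-(r₁ + w)) ≤ 1 := Real.exp_le_one_iff.mpr (by linarith)
      linarith
    have h3 : Real.exp w ≤ Real.exp (-1) := Real.exp_le_exp.mpr h
    have h4 : Real.exp (-1) ≤ 1 / 2 := by
      have h2e : (2 : ℝ) ≤ Real.exp 1 := by linarith [Real.add_one_le_exp (1 : ℝ)]
      have hmul : Real.exp (-1) * Real.exp 1 = 1 := by
        rw [← Real.exp_add]; norm_num
      nlinarith [Real.exp_nonneg (-1 : ℝ)]
    have h5 : Real.exp w * (1 - Real.exp (-(r₁ + w))) ≤ Real.exp (-1) * (r₁ + w) :=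
      mul_le_mul h3 e2 e3 (Real.exp_nonneg _)
    nlinarith [Real.exp_nonneg (-1 : ℝ)]
  · have h1 : Real.exp w ≤ 1 := Real.exp_le_one_iff.mpr hw2
    have h2 : 0 ≤ Real.exp (-r₁) := Real.exp_nonneg _
    linarith

private lemma key_ub {r₁ w : ℝ} (hr : 0 ≤ r₁) (_hw2 : w ≤ 0) :
    Real.exp (-r₁) + r₁ - Real.exp w + w ≤ r₁ + 1 + w := by
  have h1 : Real.exp (-r₁) ≤ 1 := Real.exp_le_one_iff.mpr (by linarith)
  have h2 : 0 < Real.exp w := Real.exp_pos _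
  linarith

/-- For `p ∈ (1,2)`, the period integral
`∫_{−r₁}^{0} (e^{−r₁} + r₁ − e^w + w)^{(1−p)/p} dw` tends to `∞` as `r₁ → ∞`. -/
theorem period_tends_to_infinity (p : ℝ) (hp : p ∈ Set.Ioo (1 : ℝ) 2) :
    Tendsto
      (fun r₁ : ℝ =>
        ∫ w in (-r₁)..(0 : ℝ), (Real.exp (-r₁) + r₁ - Real.exp w + w) ^ ((1 - p) / p))
      atTop atTop := by
  obtain ⟨hp1, hp2⟩ := hp
  have hp0 : 0 < p := by linarith
  set q : ℝ := (1 - p) / p with hqdef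
  have hq0 : q < 0 := div_neg_of_neg_of_pos (by linarith) hp0
  have hq1 : (-1 : ℝ) < q := by
    rw [hqdef, lt_div_iff₀ hp0]; linarith
  have hq1' : 0 < q + 1 := by linarith
  -- the comparison (lower-bound) function and its limit
  have hL : Tendsto (fun r₁ : ℝ => ((r₁ + 1) ^ (q + 1) - 1) / (q + 1)) atTop atTop := by
    apply Tendsto.atTop_div_const hq1'
    apply tendsto_atTop_add_const_right
    exact (tendsto_rpow_atTop hq1').comp (tendsto_atTop_add_const_right _ 1 tendsto_id)
  refine tendsto_atTop_mono' atTop ?_ hL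
  filter_upwards [eventually_ge_atTop (4 : ℝ)] with r₁ hr
  have hr0 : (0 : ℝ) ≤ r₁ := by linarith
  have hab : -r₁ ≤ (0 : ℝ) := by linarith
  set g : ℝ → ℝ := fun w => Real.exp (-r₁) + r₁ - Real.exp w + w with hg
  -- integrability of the comparison majorant (w + r₁)^q * (1/2)^q on [-r₁, 0]
  have hmaj : IntervalIntegrable (fun w => (w + r₁) ^ q * (1 / 2 : ℝ) ^ q) MeasureTheory.volume
      (-r₁) 0 := by
    have h0 : IntervalIntegrable (fun x : ℝ => x ^ q) MeasureTheory.volume 0 r₁ :=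
      intervalIntegral.intervalIntegrable_rpow' hq1
    have h1 := (h0.comp_add_right r₁).mul_const ((1 / 2 : ℝ) ^ q)
    simpa using h1
  -- integrability of the lower bound (r₁ + 1 + w)^q on [-r₁, 0]
  have hlowint : IntervalIntegrable (fun w => (w + (r₁ + 1)) ^ q) MeasureTheory.volume (-r₁) 0 := by
    have h0 : IntervalIntegrable (fun x : ℝ => x ^ q) MeasureTheory.volume 1 (r₁ + 1) :=
      intervalIntegral.intervalIntegrable_rpow' hq1
    have h1 := h0.comp_add_right (r₁ + 1)
    have e1 : (1 : ℝ) - (r₁ + 1) = -r₁ := by ring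
    have e2 : (r₁ + 1) - (r₁ + 1) = 0 := by ring
    rwa [e1, e2] at h1
  -- key pointwise bounds on Ioc (-r₁) 0
  have hkey : ∀ w ∈ Set.Ioc (-r₁) 0, (r₁ + w) / 2 ≤ g w := fun w hw =>
    key_lb hr hw.1 hw.2
  have hgpos : ∀ w ∈ Set.Ioc (-r₁) 0, 0 < g w := by
    intro w hw
    have hw1 := hw.1
    exact lt_of_lt_of_le (by linarith : (0:ℝ) < (r₁ + w) / 2) (hkey w hw)
  -- integrability of the integrand
  have hint : IntervalIntegrable (fun w => g w ^ q) MeasureTheory.volume (-r₁) 0 := by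
    apply hmaj.mono_fun
    · apply ContinuousOn.aestronglyMeasurable _ measurableSet_uIoc
      apply ContinuousOn.rpow_const
      · fun_prop
      · intro w hw
        rw [Set.uIoc_of_le hab] at hw
        exact Or.inl (ne_of_gt (hgpos w hw))
    · rw [Set.uIoc_of_le hab]
      refine MeasureTheory.ae_restrict_of_forall_mem measurableSet_Ioc ?_
      intro w hw
      have hpos := hgpos w hw
      have hb := hkey w hw
      have hw1 := hw.1
      have hhalf : 0 < (r₁ + w) / 2 := by linarith
      have h1 : g w ^ q ≤ ((r₁ + w) / 2) ^ q :=
        Real.rpow_le_rpow_of_nonpos hhalf hb hq0.le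
      have h2 : ((r₁ + w) / 2) ^ q = (w + r₁) ^ q * (1 / 2 : ℝ) ^ q := by
        rw [div_eq_mul_inv, Real.mul_rpow (by linarith) (by norm_num)]
        norm_num [add_comm]
      have hnn : 0 ≤ g w ^ q := Real.rpow_nonneg hpos.le q
      have hnn2 : 0 ≤ (w + r₁) ^ q * (1 / 2 : ℝ) ^ q := by
        apply mul_nonneg (Real.rpow_nonneg (by linarith) q)
          (Real.rpow_nonneg (by norm_num) q)
      simp only [Real.norm_eq_abs, abs_of_nonneg hnn, abs_of_nonneg hnn2]
      rw [← h2]; exact h1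
  -- comparison of integrals
  have hcomp : (∫ w in (-r₁)..(0 : ℝ), (w + (r₁ + 1)) ^ q) ≤ ∫ w in (-r₁)..(0 : ℝ), g w ^ q := by
    apply intervalIntegral.integral_mono_ae_restrict hab hlowint hint
    rw [← MeasureTheory.restrict_Ioc_eq_restrict_Icc]
    refine MeasureTheory.ae_restrict_of_forall_mem measurableSet_Ioc ?_
    intro w hw
    have hpos := hgpos w hw
    have hub : g w ≤ w + (r₁ + 1) := by
      have := key_ub hr0 hw.2 (r₁ := r₁) (w := w)
      simp only [hg]; linarith
    exact Real.rpow_le_rpow_of_nonpos hpos hub hq0.le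
  -- compute the lower integral
  have hval : (∫ w in (-r₁)..(0 : ℝ), (w + (r₁ + 1)) ^ q) = ((r₁ + 1) ^ (q + 1) - 1) / (q + 1) := by
    rw [intervalIntegral.integral_comp_add_right (fun x => x ^ q) (r₁ + 1)]
    have e1 : -r₁ + (r₁ + 1) = 1 := by ring
    have e2 : (0 : ℝ) + (r₁ + 1) = r₁ + 1 := by ring
    rw [e1, e2, integral_rpow (Or.inl hq1)]
    rw [Real.one_rpow]
  calc ((r₁ + 1) ^ (q + 1) - 1) / (q + 1)
      = ∫ w in (-r₁)..(0 : ℝ), (w + (r₁ + 1)) ^ q := hval.symm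
    _ ≤ ∫ w in (-r₁)..(0 : ℝ), g w ^ q := hcomp
end
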